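/- arXiv:quant-ph/0406237 — 5 statements merged into one kernel-verified Lean document; each statement's English description precedes it below -/
import Mathlib

section
/- Let Ξ be a positive semidefinite operator on a finite-dimensional complex Hilbert space H, and let Θ be a Hermitian operator on H. Then the following are equivalent: (1) there exists ε > 0 such that Ξ + tΘ ≥ 0 for all t ∈ [−ε, ε]; (2) the support (range) of Θ is contained in the support of Ξ. -/
/-!
If `Ξ ± εΘ ≥ 0` and `Ξ x = 0`, then `±ε ⟪Θ x, x⟫ ≥ 0`, so the form of `Ξ + εΘ` vanishes at `x`
and positivity forces `(Ξ + εΘ) x = 0`, i.e. `Θ x = 0`. Hence `ker Ξ ⊆ ker Θ`, which for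
self-adjoint operators is the inclusion of ranges, the orthogonal complements of the kernels.

Conversely, if `ker Ξ ⊆ ker Θ`, both forms only see the component of `x` in `(ker Ξ)ᗮ`, on which
`Ξ` is coercive (its form has a positive minimum on the compact unit sphere there). This gives
`|⟪Θ x, x⟫| ≤ C ⟪Ξ x, x⟫`, so `Ξ + tΘ ≥ 0` for `|t| ≤ 1 / C`.
-/

open scoped ComplexOrder InnerProductSpace Matrix

namespace LinearMap

open RCLike

variable {𝕜 E : Type*} [RCLike 𝕜] [NormedAddCommGroup E] [InnerProductSpace 𝕜 E]

theorem re_inner_ofReal_smul_self (T : E →ₗ[𝕜] E) (r : ℝ) (x : E) :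
    re ⟪T ((r : 𝕜) • x), (r : 𝕜) • x⟫_𝕜 = r ^ 2 * re ⟪T x, x⟫_𝕜 := by
  simp only [map_smul, inner_smul_real_left, inner_smul_real_right, smul_smul, RCLike.smul_re]
  ring

theorem IsPositive.map_eq_zero_of_re_inner_eq_zero {T : E →ₗ[𝕜] E} (hT : T.IsPositive) {x : E}
    (hx : re ⟪T x, x⟫_𝕜 = 0) : T x = 0 := by
  -- the form at `x - s • T x` is a nonnegative quadratic in `s` with no constant term
  have hquad : ∀ s : ℝ,
      0 ≤ re ⟪T (T x), T x⟫_𝕜 * (s * s) + (-2 * ‖T x‖ ^ 2) * s + 0 := fun s => by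
    have h := hT.re_inner_nonneg_left (x - (s : 𝕜) • T x)
    simp only [map_sub, map_smul, inner_sub_left, inner_sub_right, inner_smul_real_left,
      inner_smul_real_right, hT.isSymmetric (T x) x, RCLike.smul_re, hx,
      inner_self_eq_norm_sq] at h
    linarith
  have hdiscrim := discrim_le_zero hquad
  rw [discrim] at hdiscrim
  have hnorm : ‖T x‖ ^ 2 = 0 := by nlinarith [sq_nonneg (‖T x‖ ^ 2)]
  simpa using hnorm

theorem IsPositive.exists_pos_mul_norm_sq_le_re_inner [FiniteDimensional 𝕜 E] {T : E →ₗ[𝕜] E}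
    (hT : T.IsPositive) :
    ∃ c > 0, ∀ x ∈ (ker T)ᗮ, c * ‖x‖ ^ 2 ≤ re ⟪T x, x⟫_𝕜 := by
  have := FiniteDimensional.proper_rclike 𝕜 E
  set S := Metric.sphere (0 : E) 1 ∩ (ker T)ᗮ
  have hS : IsCompact S := (isCompact_sphere 0 1).inter_right (ker T).isClosed_orthogonal
  have hnormalize : ∀ x ∈ (ker T)ᗮ, x ≠ 0 → ((‖x‖⁻¹ : ℝ) : 𝕜) • x ∈ S := fun x hx hx0 =>
    ⟨by simp [norm_smul, hx0], (ker T)ᗮ.smul_mem _ hx⟩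
  rcases S.eq_empty_or_nonempty with hempty | hne
  · refine ⟨1, one_pos, fun x hx => ?_⟩
    obtain rfl : x = 0 := by
      by_contra hx0
      simpa [hempty] using hnormalize x hx hx0
    simp
  have hcont : Continuous fun x => re ⟪T x, x⟫_𝕜 :=
    continuous_re.comp (T.continuous_of_finiteDimensional.inner continuous_id)
  obtain ⟨x₀, ⟨hx₀1, hx₀K⟩, hmin⟩ := hS.exists_isMinOn hne hcont.continuousOn
  refine ⟨re ⟪T x₀, x₀⟫_𝕜, lt_of_le_of_ne (hT.re_inner_nonneg_left x₀) fun h => ?_, fun x hx => ?_⟩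
  · have hx₀ker : x₀ ∈ ker T := hT.map_eq_zero_of_re_inner_eq_zero h.symm
    have hx₀0 : x₀ = 0 := Submodule.disjoint_def.mp (ker T).orthogonal_disjoint x₀ hx₀ker hx₀K
    simp [hx₀0] at hx₀1
  · rcases eq_or_ne x 0 with rfl | hx0
    · simp
    have h : re ⟪T x₀, x₀⟫_𝕜 ≤ ‖x‖⁻¹ ^ 2 * re ⟪T x, x⟫_𝕜 := by
      rw [← re_inner_ofReal_smul_self]; exact hmin (hnormalize x hx hx0)
    have hx : 0 < ‖x‖ := norm_pos_iff.mpr hx0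
    calc re ⟪T x₀, x₀⟫_𝕜 * ‖x‖ ^ 2 ≤ ‖x‖⁻¹ ^ 2 * re ⟪T x, x⟫_𝕜 * ‖x‖ ^ 2 := by gcongr
      _ = re ⟪T x, x⟫_𝕜 := by field_simp

theorem IsSymmetric.inner_map_self_eq_of_sub_mem_ker {T : E →ₗ[𝕜] E} (hT : T.IsSymmetric)
    {x y : E} (h : x - y ∈ ker T) : ⟪T x, x⟫_𝕜 = ⟪T y, y⟫_𝕜 := by
  have hxy : T x = T y := sub_eq_zero.mp (by rwa [← map_sub])
  rw [hxy, hT y x, hxy, hT y y]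

theorem IsSymmetric.range_le_range_iff_ker_le_ker [FiniteDimensional 𝕜 E] {A B : E →ₗ[𝕜] E}
    (hA : A.IsSymmetric) (hB : B.IsSymmetric) : range B ≤ range A ↔ ker A ≤ ker B := by
  rw [← hA.orthogonal_range, ← hB.orthogonal_range, Submodule.orthogonal_le_orthogonal_iff]

theorem IsPositive.exists_abs_re_inner_le_mul_re_inner [FiniteDimensional 𝕜 E]
    {A B : E →ₗ[𝕜] E} (hA : A.IsPositive) (hB : B.IsSymmetric) (hker : ker A ≤ ker B) :
    ∃ C > 0, ∀ x, |re ⟪B x, x⟫_𝕜| ≤ C * re ⟪A x, x⟫_𝕜 := by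
  obtain ⟨c, hc, hcoer⟩ := hA.exists_pos_mul_norm_sq_le_re_inner
  obtain ⟨M, hM, hBM⟩ := (toContinuousLinearMap B).bound
  refine ⟨M / c, by positivity, fun x => ?_⟩
  set p := (ker A).starProjection x
  have hp : p ∈ ker A := (ker A).starProjection_apply_mem x
  have hxp : x - (x - p) ∈ ker A := by simpa using hp
  rw [hA.isSymmetric.inner_map_self_eq_of_sub_mem_ker hxp,
    hB.inner_map_self_eq_of_sub_mem_ker (hker hxp)]
  set y := x - p
  calc |re ⟪B y, y⟫_𝕜| ≤ ‖B y‖ * ‖y‖ := (abs_re_le_norm _).trans (norm_inner_le_norm _ _)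
    _ ≤ M * ‖y‖ * ‖y‖ := by gcongr; exact hBM y
    _ = M / c * (c * ‖y‖ ^ 2) := by field_simp
    _ ≤ M / c * re ⟪A y, y⟫_𝕜 := by
      gcongr; exact hcoer y ((ker A).sub_starProjection_mem_orthogonal x)

theorem ker_le_ker_of_isPositive_add_smul_of_isPositive_sub_smul {A B : E →ₗ[𝕜] E} {ε : 𝕜}
    (hε : ε ≠ 0) (hadd : (A + ε • B).IsPositive) (hsub : (A - ε • B).IsPositive) :
    ker A ≤ ker B := by
  intro x hx
  rw [mem_ker] at hx ⊢
  have hadd_x : (A + ε • B) x = ε • B x := by simp [hx]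
  have hsub_x : (A - ε • B) x = -(ε • B x) := by simp [hx]
  have hle := hsub.re_inner_nonneg_left x
  have hge := hadd.re_inner_nonneg_left x
  rw [hsub_x, inner_neg_left, map_neg, neg_nonneg] at hle
  rw [hadd_x] at hge
  have hzero : re ⟪(A + ε • B) x, x⟫_𝕜 = 0 := by
    rw [hadd_x]
    exact le_antisymm hle hge
  have hsmul := hadd.map_eq_zero_of_re_inner_eq_zero hzero
  rw [hadd_x] at hsmul
  exact (smul_eq_zero.mp hsmul).resolve_left hε

theorem IsPositive.exists_forall_isPositive_add_smul_iff_range_le [FiniteDimensional 𝕜 E]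
    {A B : E →ₗ[𝕜] E} (hA : A.IsPositive) (hB : B.IsSymmetric) :
    (∃ ε : ℝ, 0 < ε ∧ ∀ t ∈ Set.Icc (-ε) ε, (A + (t : 𝕜) • B).IsPositive) ↔
      range B ≤ range A := by
  rw [hA.isSymmetric.range_le_range_iff_ker_le_ker hB]
  constructor
  · rintro ⟨ε, hε, h⟩
    refine ker_le_ker_of_isPositive_add_smul_of_isPositive_sub_smul (by exact_mod_cast hε.ne')
      (h ε ⟨by linarith, le_rfl⟩) ?_
    simpa [sub_eq_add_neg] using h (-ε) ⟨le_rfl, by linarith⟩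
  · intro hker
    obtain ⟨C, hC, hbound⟩ := hA.exists_abs_re_inner_le_mul_re_inner hB hker
    refine ⟨C⁻¹, by positivity, fun t ht => ⟨hA.isSymmetric.add (hB.smul (conj_ofReal t)), ?_⟩⟩
    intro x
    have htC : |t| * C ≤ 1 := by
      rw [← le_div_iff₀ hC, one_div]; exact abs_le.mpr ht
    have hAx := hA.re_inner_nonneg_left x
    have hBx := neg_abs_le (t * re ⟪B x, x⟫_𝕜)
    rw [abs_mul] at hBx
    simp only [add_apply, smul_apply, inner_add_left, inner_smul_real_left, map_add,
      RCLike.smul_re]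
    nlinarith [mul_le_mul_of_nonneg_left (hbound x) (abs_nonneg t)]

end LinearMap

theorem Matrix.range_toLpLin {R m n : Type*} [CommRing R] [Fintype n]
    [DecidableEq n] (p q : ENNReal) (M : Matrix m n R) :
    LinearMap.range (toLpLin p q M) =
      (LinearMap.range (toLin' M)).comap (WithLp.linearEquiv q R (m → R)).toLinearMap := by
  ext y
  constructor
  · rintro ⟨x, rfl⟩
    exact ⟨WithLp.ofLp x, rfl⟩
  · rintro ⟨x, hx⟩
    exact ⟨WithLp.toLp p x, congrArg (WithLp.toLp q) hx⟩

theorem Matrix.range_toLpLin_le_range_toLpLin_iff {R m n : Type*} [CommRing R] [Fintype n]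
    [DecidableEq n] (p q : ENNReal) {M N : Matrix m n R} :
    LinearMap.range (toLpLin p q M) ≤ LinearMap.range (toLpLin p q N) ↔
      LinearMap.range (toLin' M) ≤ LinearMap.range (toLin' N) := by
  rw [Matrix.range_toLpLin, Matrix.range_toLpLin]
  exact Submodule.comap_le_comap_iff_of_surjective (LinearEquiv.surjective _)

/-- Lemma 1 (PosAndSupp): for `Ξ` positive semidefinite and `Θ` Hermitian on a
finite-dimensional complex Hilbert space, `Ξ + tΘ ≥ 0` for all `t` in some interval
`[-ε, ε]` with `ε > 0` iff the support of `Θ` is contained in the support of `Ξ`. -/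
theorem extremal_povm_stmt0 {n : ℕ} (Ξ Θ : Matrix (Fin n) (Fin n) ℂ)
    (hΞ : Ξ.PosSemidef) (hΘ : Θ.IsHermitian) :
    (∃ ε : ℝ, 0 < ε ∧ ∀ t : ℝ, t ∈ Set.Icc (-ε) ε → (Ξ + t • Θ).PosSemidef) ↔
      LinearMap.range (Matrix.toLin' Θ) ≤ LinearMap.range (Matrix.toLin' Ξ) := by
  have hpos (t : ℝ) : (Ξ + t • Θ).PosSemidef ↔
      (Ξ.toEuclideanLin + (t : ℂ) • Θ.toEuclideanLin).IsPositive := by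
    rw [← Matrix.isPositive_toEuclideanLin_iff, map_add, ← map_smul, Complex.coe_smul]
  simp_rw [hpos, ← Matrix.range_toLpLin_le_range_toLpLin_iff 2 2]
  exact LinearMap.IsPositive.exists_forall_isPositive_add_smul_iff_range_le
    (Matrix.isPositive_toEuclideanLin_iff.mpr hΞ) (Matrix.isSymmetric_toEuclideanLin_iff.mpr hΘ)
end

section
/- Let C be a convex set of self-adjoint operators on a finite-dimensional Hilbert space, defined as the intersection of the cone of positive semidefinite operators with finitely many affine constraints of the form Tr[T_k Ξ] = c_k and commutation constraints [Ξ, U] = 0 for U in a fixed set of unitaries. Then Ξ ∈ C is an extreme point of C if and only if every ζ ∈ C with support(ζ) ⊆ support(Ξ) satisfies ζ = Ξ. -/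
open scoped ComplexOrder Matrix

/-!
If `range ζ ⊆ range Ξ` then, by Douglas' factorization `√ζ = √Ξ D`, we get
`ζ = √Ξ (D Dᴴ) √Ξ ≤ ‖D‖² Ξ`, i.e. `ζ ≤ r Ξ` for some `r > 0`. Hence the point `Ξ + r⁻¹ (Ξ - ζ)`,
on the line through `ζ` and `Ξ` beyond `Ξ`, is still positive semidefinite; it satisfies the
affine constraints, so `Ξ` lies strictly between two points of `C`, and extremality forces `ζ = Ξ`.
Conversely, if `Ξ = a Ξ₁ + b Ξ₂` with `a, b > 0`, then `Ξ₁ ≤ a⁻¹ Ξ`, so `ker Ξ ⊆ ker Ξ₁`; for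
Hermitian matrices this means `range Ξ₁ ⊆ range Ξ`, and minimality gives `Ξ₁ = Ξ`.
-/

namespace Matrix

open scoped MatrixOrder Matrix.Norms.L2Operator

theorem exists_mul_eq_of_range_toLin'_le {R l m n : Type*} [CommSemiring R] [Fintype m] [Fintype n]
    [DecidableEq m] [DecidableEq n] {A : Matrix l m R} {B : Matrix l n R}
    (h : LinearMap.range B.toLin' ≤ LinearMap.range A.toLin') : ∃ D : Matrix m n R, A * D = B := by
  obtain ⟨D, hD⟩ := Module.projective_lifting_property (toLin' A).rangeRestrict
    ((toLin' B).codRestrict _ fun x ↦ h ⟨x, rfl⟩) (toLin' A).surjective_rangeRestrict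
  refine ⟨toLin'.symm D, toLin'.injective ?_⟩
  rw [toLin'_mul, LinearEquiv.apply_symm_apply]
  exact LinearMap.ext fun x ↦ congrArg Subtype.val (LinearMap.congr_fun hD x)

section

variable {𝕜 n : Type*} [RCLike 𝕜] [Fintype n] [DecidableEq n]

theorem IsHermitian.range_toLin'_le_range_iff_ker_le_ker {A B : Matrix n n 𝕜}
    (hA : A.IsHermitian) (hB : B.IsHermitian) :
    LinearMap.range B.toLin' ≤ LinearMap.range A.toLin' ↔
      LinearMap.ker A.toLin' ≤ LinearMap.ker B.toLin' := by
  set e : (n → 𝕜) ≃ₗ[𝕜] EuclideanSpace 𝕜 n := (WithLp.linearEquiv 2 𝕜 (n → 𝕜)).symm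
  have hrange (M : Matrix n n 𝕜) :
      LinearMap.range (toEuclideanLin M) = (LinearMap.range M.toLin').map e.toLinearMap := by
    change LinearMap.range ((e.toLinearMap ∘ₗ M.toLin') ∘ₗ e.symm.toLinearMap) = _
    rw [LinearEquiv.range_comp, LinearMap.range_comp]
  have hker (M : Matrix n n 𝕜) :
      LinearMap.ker (toEuclideanLin M) = (LinearMap.ker M.toLin').map e.toLinearMap := by
    change LinearMap.ker (e.toLinearMap ∘ₗ M.toLin' ∘ₗ e.symm.toLinearMap) = _
    rw [LinearEquiv.ker_comp, LinearMap.ker_comp, Submodule.comap_equiv_eq_map_symm]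
    rfl
  rw [← Submodule.map_le_map_iff_of_injective e.injective,
    ← Submodule.map_le_map_iff_of_injective e.injective, ← hrange, ← hrange, ← hker, ← hker,
    ← (isSymmetric_toEuclideanLin_iff.mpr hA).orthogonal_range,
    ← (isSymmetric_toEuclideanLin_iff.mpr hB).orthogonal_range,
    Submodule.orthogonal_le_orthogonal_iff]

theorem PosSemidef.range_toLin'_sqrt {A : Matrix n n 𝕜} (hA : A.PosSemidef) :
    LinearMap.range (CFC.sqrt A).toLin' = LinearMap.range A.toLin' := by
  have hS : (CFC.sqrt A).IsHermitian := (nonneg_iff_posSemidef.mp (CFC.sqrt_nonneg A)).isHermitian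
  have hSS : (CFC.sqrt A)ᴴ * CFC.sqrt A = A := by
    rw [hS.eq]
    exact CFC.sqrt_mul_sqrt_self A hA.nonneg
  refine le_antisymm ((hA.isHermitian.range_toLin'_le_range_iff_ker_le_ker hS).mpr ?_) ?_
  · have hker := ker_mulVecLin_conjTranspose_mul_self (CFC.sqrt A)
    rw [hSS] at hker
    rw [toLin'_apply', toLin'_apply', hker]
  · calc LinearMap.range A.toLin'
        = LinearMap.range ((CFC.sqrt A)ᴴ.toLin' ∘ₗ (CFC.sqrt A).toLin') := by
          rw [← toLin'_mul, hSS]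
      _ ≤ _ := by
          rw [hS.eq]
          exact LinearMap.range_comp_le_range _ _

theorem PosSemidef.range_toLin'_le_of_le_smul {A B : Matrix n n 𝕜} {r : ℝ} (hA : A.IsHermitian)
    (hB : B.PosSemidef) (h : B ≤ r • A) :
    LinearMap.range B.toLin' ≤ LinearMap.range A.toLin' := by
  refine (hA.range_toLin'_le_range_iff_ker_le_ker hB.isHermitian).mpr fun x hx ↦ ?_
  rw [LinearMap.mem_ker, toLin'_apply] at hx ⊢
  have hle := (le_iff.mp h).dotProduct_mulVec_nonneg x
  rw [sub_mulVec, smul_mulVec, hx, smul_zero, zero_sub, dotProduct_neg, neg_nonneg] at hle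
  exact (hB.dotProduct_mulVec_zero_iff x).mp (le_antisymm hle (hB.dotProduct_mulVec_nonneg x))

theorem PosSemidef.exists_le_smul_of_range_toLin'_le {A B : Matrix n n ℂ} (hA : A.PosSemidef)
    (hB : B.PosSemidef) (h : LinearMap.range B.toLin' ≤ LinearMap.range A.toLin') :
    ∃ r : ℝ, 0 < r ∧ B ≤ r • A := by
  have hS : LinearMap.range (CFC.sqrt B).toLin' ≤ LinearMap.range (CFC.sqrt A).toLin' := by
    rwa [hA.range_toLin'_sqrt, hB.range_toLin'_sqrt]
  obtain ⟨D, hD⟩ := exists_mul_eq_of_range_toLin'_le hS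
  have hB' : B = CFC.sqrt A * (D * star D) * CFC.sqrt A := by
    rw [← CFC.sqrt_mul_sqrt_self B hB.nonneg]
    nth_rw 2 [← (CFC.sqrt_nonneg B).isSelfAdjoint.star_eq]
    rw [← hD, star_mul, (CFC.sqrt_nonneg A).isSelfAdjoint.star_eq, mul_assoc, mul_assoc, mul_assoc]
  refine ⟨‖D‖ ^ 2 + 1, by positivity, ?_⟩
  calc B ≤ CFC.sqrt A * algebraMap ℝ _ (‖D‖ ^ 2) * CFC.sqrt A :=
        hB' ▸ conjugate_le_conjugate_of_nonneg CStarAlgebra.mul_star_le_algebraMap_norm_sq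
          (CFC.sqrt_nonneg A)
    _ = (‖D‖ ^ 2) • A := by
        rw [Algebra.algebraMap_eq_smul_one, mul_smul_comm, mul_one, smul_mul_assoc,
          CFC.sqrt_mul_sqrt_self A hA.nonneg]
    _ ≤ (‖D‖ ^ 2 + 1) • A := by
        rw [add_smul, one_smul]
        exact le_add_of_nonneg_right hA.nonneg

theorem mem_extremePoints_posSemidef_inter_iff {P : AffineSubspace ℝ (Matrix n n ℂ)}
    {X : Matrix n n ℂ} (hX : X ∈ {A : Matrix n n ℂ | A.PosSemidef} ∩ P) :
    X ∈ ({A : Matrix n n ℂ | A.PosSemidef} ∩ P).extremePoints ℝ ↔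
      ∀ Y ∈ {A : Matrix n n ℂ | A.PosSemidef} ∩ P,
        LinearMap.range Y.toLin' ≤ LinearMap.range X.toLin' → Y = X := by
  refine ⟨fun hext Y hY hYX ↦ ?_, fun hmin ↦ ⟨hX, ?_⟩⟩
  · obtain ⟨r, hr, hYr⟩ := hX.1.exists_le_smul_of_range_toLin'_le hY.1 hYX
    set s := r⁻¹
    have hs : 0 < s := inv_pos.mpr hr
    have hZ : s • (X - Y) + X ∈ {A : Matrix n n ℂ | A.PosSemidef} ∩ P := by
      refine ⟨nonneg_iff_posSemidef.mp ?_, P.smul_vsub_vadd_mem s hX.2 hY.2 hX.2⟩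
      have hZ' : s • (X - Y) + X = s • (r • X - Y) + s • X := by
        rw [smul_sub, smul_sub, smul_smul, inv_mul_cancel₀ hr.ne', one_smul]
        abel
      rw [hZ']
      exact add_nonneg (smul_nonneg hs.le (sub_nonneg.mpr hYr)) (smul_nonneg hs.le hX.1.nonneg)
    have hseg : X ∈ openSegment ℝ Y (s • (X - Y) + X) := by
      refine ⟨s / (s + 1), 1 / (s + 1), by positivity, by positivity, by field_simp, ?_⟩
      match_scalars
      · ring
      · field_simp
    exact ((mem_extremePoints.mp hext).2 Y hY _ hZ hseg).1
  · rintro x₁ h₁ x₂ h₂ ⟨a, b, ha, hb, -, rfl⟩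
    refine hmin x₁ h₁ (h₁.1.range_toLin'_le_of_le_smul hX.1.isHermitian (r := a⁻¹) ?_)
    calc x₁ = a⁻¹ • (a • x₁) := (inv_smul_smul₀ ha.ne' x₁).symm
      _ ≤ a⁻¹ • (a • x₁ + b • x₂) := smul_le_smul_of_nonneg_left
          (le_add_of_nonneg_right (smul_nonneg hb.le h₂.1.nonneg)) (inv_nonneg.mpr ha.le)

end

def traceAndCommuteConstraints {n ι κ : Type*} [Fintype n] (T : ι → Matrix n n ℂ) (c : ι → ℂ)
    (U : κ → Matrix n n ℂ) : AffineSubspace ℝ (Matrix n n ℂ) where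
  carrier := {Ξ | (∀ k, (T k * Ξ).trace = c k) ∧ ∀ l, Ξ * U l = U l * Ξ}
  smul_vsub_vadd_mem' a Ξ₁ Ξ₂ Ξ₃ h₁ h₂ h₃ := by
    refine ⟨fun k ↦ ?_, fun l ↦ ?_⟩
    · simp [Matrix.mul_add, Matrix.mul_sub, h₁.1 k, h₂.1 k, h₃.1 k]
    · simp [Matrix.add_mul, Matrix.mul_add, Matrix.sub_mul, Matrix.mul_sub, h₁.2 l, h₂.2 l, h₃.2 l]

end Matrix

theorem extremal_povm_stmt3_general {n K L : ℕ}
    (T : Fin K → Matrix (Fin n) (Fin n) ℂ) (c : Fin K → ℂ)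
    (U : Fin L → Matrix (Fin n) (Fin n) ℂ)
    (C : Set (Matrix (Fin n) (Fin n) ℂ))
    (hC : C = {Ξ | Ξ.PosSemidef ∧ (∀ k, (T k * Ξ).trace = c k) ∧ ∀ l, Ξ * U l = U l * Ξ})
    (Ξ : Matrix (Fin n) (Fin n) ℂ) (hΞ : Ξ ∈ C) :
    Ξ ∈ C.extremePoints ℝ ↔
      ∀ ζ ∈ C, LinearMap.range (Matrix.toLin' ζ) ≤ LinearMap.range (Matrix.toLin' Ξ) →
        ζ = Ξ := by
  subst hC
  exact Matrix.mem_extremePoints_posSemidef_inter_iff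
    (P := Matrix.traceAndCommuteConstraints T c U) hΞ

/-- Theorem 1 (minimal support characterization of extremality): let `C` be the convex
set of positive semidefinite operators satisfying affine trace constraints
`Tr[T_k Ξ] = c_k` and commuting with a fixed family of unitaries.  Then `Ξ ∈ C` is an
extreme point of `C` iff every `ζ ∈ C` with `supp ζ ⊆ supp Ξ` equals `Ξ`. -/
theorem extremal_povm_stmt3 {n K L : ℕ}
    (T : Fin K → Matrix (Fin n) (Fin n) ℂ) (c : Fin K → ℂ)
    (U : Fin L → Matrix (Fin n) (Fin n) ℂ)
    (hU : ∀ l, U l ∈ Matrix.unitaryGroup (Fin n) ℂ)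
    (C : Set (Matrix (Fin n) (Fin n) ℂ))
    (hC : C = {Ξ | Ξ.PosSemidef ∧ (∀ k, (T k * Ξ).trace = c k) ∧ ∀ l, Ξ * U l = U l * Ξ})
    (Ξ : Matrix (Fin n) (Fin n) ℂ) (hΞ : Ξ ∈ C) :
    Ξ ∈ C.extremePoints ℝ ↔
      ∀ ζ ∈ C, LinearMap.range (Matrix.toLin' ζ) ≤ LinearMap.range (Matrix.toLin' Ξ) →
        ζ = Ξ :=
  extremal_povm_stmt3_general T c U C hC Ξ hΞ
end

section
/- Let Ξ be a positive semidefinite operator on H = ⊕_{μ} ⊕_{i=1}^{m_μ} H_i^{(μ)} satisfying Tr[T_{ij}^{(μ)} Ξ] = d_μ δ_{ij} for all μ and all i, j, where T_{ij}^{(μ)} are the canonical isomorphisms between the equivalent subspaces H_j^{(μ)} and H_i^{(μ)} of dimension d_μ. Then rank(Ξ) ≥ max_μ (m_μ / d_μ). -/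
/-!
Only the μ-block of `Ξ` matters. Summing its `d μ` diagonal `m μ × m μ` slices
`(i, j) ↦ Ξ ⟨μ, i, n⟩ ⟨μ, j, n⟩` gives a partial trace, which the trace conditions force
to be `d μ • 1`, of rank `m μ`. Each slice is a submatrix of `Ξ`, so by subadditivity of
rank, `m μ ≤ d μ * rank Ξ`.
-/

open scoped ComplexOrder Matrix

/-- The index set of `H = ⊕_{μ} ⊕_{i=1}^{m μ} H_i^{(μ)}`, each `H_i^{(μ)}` of
dimension `d μ`, with orthonormal basis vectors `|(μ,i),n⟩`. -/
abbrev PovmIdx {M : ℕ} (m d : Fin M → ℕ) : Type := (μ : Fin M) × (Fin (m μ) × Fin (d μ))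

/-- The canonical intertwiner `T_{ij}^{(μ)} = Σ_n |(μ,i),n⟩⟨(μ,j),n|`. -/
noncomputable def povmT {M : ℕ} (m d : Fin M → ℕ) (μ : Fin M) (i j : Fin (m μ)) :
    Matrix (PovmIdx m d) (PovmIdx m d) ℂ :=
  ∑ n : Fin (d μ), Matrix.single (⟨μ, i, n⟩ : PovmIdx m d) ⟨μ, j, n⟩ 1

namespace Matrix

variable {m n R : Type*} [Fintype n] [Field R]

theorem rank_add_le (A B : Matrix m n R) : (A + B).rank ≤ A.rank + B.rank := by
  rw [rank, rank, rank, mulVecLin_add]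
  exact (Submodule.finrank_mono (LinearMap.range_add_le _ _)).trans
    (Submodule.finrank_add_le_finrank_add_finrank _ _)

theorem rank_finsetSum_le {ι : Type*} (s : Finset ι) (A : ι → Matrix m n R) :
    (∑ k ∈ s, A k).rank ≤ ∑ k ∈ s, (A k).rank :=
  Finset.sum_hom_rel (r := fun A k => rank A ≤ k) rank_zero.le
    fun _ _ _ h => (rank_add_le _ _).trans (by gcongr)

end Matrix

def isotypicPartialTrace {R : Type*} [AddCommMonoid R] {M : ℕ} (m d : Fin M → ℕ) (μ : Fin M)
    (Ξ : Matrix (PovmIdx m d) (PovmIdx m d) R) : Matrix (Fin (m μ)) (Fin (m μ)) R :=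
  ∑ n : Fin (d μ), Ξ.submatrix (fun i => ⟨μ, i, n⟩) (fun j => ⟨μ, j, n⟩)

theorem trace_povmT_mul {M : ℕ} (m d : Fin M → ℕ) (μ : Fin M) (i j : Fin (m μ))
    (Ξ : Matrix (PovmIdx m d) (PovmIdx m d) ℂ) :
    (povmT m d μ i j * Ξ).trace = isotypicPartialTrace m d μ Ξ j i := by
  simp [povmT, isotypicPartialTrace, Finset.sum_mul, Matrix.trace_sum, Matrix.trace_single_mul,
    Matrix.sum_apply]

theorem rank_isotypicPartialTrace_le {R : Type*} [Field R] {M : ℕ} (m d : Fin M → ℕ)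
    (μ : Fin M) (Ξ : Matrix (PovmIdx m d) (PovmIdx m d) R) :
    (isotypicPartialTrace m d μ Ξ).rank ≤ d μ * Ξ.rank := by
  calc (isotypicPartialTrace m d μ Ξ).rank
      ≤ ∑ n : Fin (d μ), (Ξ.submatrix (fun i => ⟨μ, i, n⟩) (fun j => ⟨μ, j, n⟩)).rank :=
        Matrix.rank_finsetSum_le _ _
    _ ≤ ∑ _n : Fin (d μ), Ξ.rank := Finset.sum_le_sum fun _ _ => Matrix.rank_submatrix_le _ _ _
    _ = d μ * Ξ.rank := by simp

theorem extremal_povm_stmt7_general {M : ℕ} (m d : Fin M → ℕ)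
    (Ξ : Matrix (PovmIdx m d) (PovmIdx m d) ℂ)
    (hnorm : ∀ (μ : Fin M) (i j : Fin (m μ)),
      (povmT m d μ i j * Ξ).trace = if i = j then (d μ : ℂ) else 0) :
    ∀ μ : Fin M, (m μ : ℝ) / (d μ : ℝ) ≤ (Ξ.rank : ℝ) := by
  intro μ
  rcases (d μ).eq_zero_or_pos with hd | hd
  · simp [hd] -- `x / 0 = 0` in `ℝ`
  have hT : isotypicPartialTrace m d μ Ξ = (d μ : ℂ) • 1 := by
    ext i j
    rw [← trace_povmT_mul, hnorm, Matrix.smul_apply, Matrix.one_apply]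
    simp [eq_comm]
  have hm : m μ ≤ d μ * Ξ.rank := by
    have hdC : (d μ : ℂ) ∈ nonZeroDivisors ℂ := mem_nonZeroDivisors_of_ne_zero (by positivity)
    simpa [hT, Matrix.rank_smul_of_mem_nonZeroDivisors _ hdC] using
      rank_isotypicPartialTrace_le m d μ Ξ
  rw [div_le_iff₀ (by exact_mod_cast hd), mul_comm]
  exact_mod_cast hm

/-- Rank lower bound: if `Ξ ≥ 0` satisfies `Tr[T_{ij}^{(μ)} Ξ] = d_μ δ_{ij}`, then
`rank Ξ ≥ m_μ / d_μ` for every `μ`, i.e. `rank Ξ ≥ max_μ (m_μ/d_μ)`. -/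
theorem extremal_povm_stmt7 {M : ℕ} (m d : Fin M → ℕ) (hd : ∀ μ, 0 < d μ)
    (Ξ : Matrix (PovmIdx m d) (PovmIdx m d) ℂ) (hΞ : Ξ.PosSemidef)
    (hnorm : ∀ (μ : Fin M) (i j : Fin (m μ)),
      (povmT m d μ i j * Ξ).trace = if i = j then (d μ : ℂ) else 0) :
    ∀ μ : Fin M, (m μ : ℝ) / (d μ : ℝ) ≤ (Ξ.rank : ℝ) :=
  extremal_povm_stmt7_general m d Ξ hnorm
end

section
/- Uniqueness under randomization (stability): with Ξ₀, P, r as above, let σ be a density operator with support(σ) orthogonal to support(Ξ₀), let q̄ be the maximal eigenvalue of σ, and let ρ = (1−α)P/r + ασ with 0 ≤ α < 1/(1 + r·q̄). Then for every ζ in C (PSD operators with Tr[ζ] = dim H and the minimal-support property for Ξ₀), Tr[ρζ] ≤ (1−α)·dim(H)/r, with equality if and only if ζ = Ξ₀. -/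
/-!
Put `t = Re Tr[(1 - P) ζ] ≥ 0`. As `Tr ζ = n`, `Tr[P ζ] = n - t`; as `σ` is supported on the
range of `1 - P` and `σ ≤ q̄ • 1`, `0 ≤ Tr[σ ζ] ≤ q̄ t`. Hence
`Tr[ρ ζ] ≤ (1 - α) n / r - ((1 - α) / r - α q̄) t`, and the bound on `α` makes the coefficient
of `t` positive, so equality holds exactly when `t = 0`. For positive `ζ`, `t = 0` says that the
range of `ζ` lies in the range of `P`, which is that of `Ξ₀`, and minimality of `Ξ₀` gives
`ζ = Ξ₀`.
-/

open scoped ComplexOrder Matrix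

namespace Matrix

variable {n 𝕜 : Type*} [Fintype n] [RCLike 𝕜]

open scoped MatrixOrder in
theorem _root_.IsStarProjection.posSemidef {P : Matrix n n 𝕜} (hP : IsStarProjection P) :
    P.PosSemidef :=
  nonneg_iff_posSemidef.mp hP.nonneg

variable [DecidableEq n]

open scoped MatrixOrder in
theorem IsHermitian.le_smul_one_of_eigenvalues_le {A : Matrix n n 𝕜} (hA : A.IsHermitian)
    {q : ℝ} (hq : ∀ i, hA.eigenvalues i ≤ q) : A ≤ (q : 𝕜) • 1 := by
  rw [← RCLike.real_smul_eq_coe_smul, ← Algebra.algebraMap_eq_smul_one]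
  refine le_algebraMap_of_spectrum_le (fun x hx ↦ ?_) hA
  obtain ⟨i, rfl⟩ := hA.spectrum_real_eq_range_eigenvalues ▸ hx
  exact hq i

open scoped MatrixOrder in
theorem PosSemidef.trace_mul_nonneg {A B : Matrix n n 𝕜} (hA : A.PosSemidef)
    (hB : B.PosSemidef) : 0 ≤ (A * B).trace := by
  obtain ⟨X, rfl⟩ := CStarAlgebra.nonneg_iff_eq_star_mul_self.mp hA.nonneg
  rw [star_eq_conjTranspose, mul_assoc, trace_mul_comm]
  exact (hB.mul_mul_conjTranspose_same X).trace_nonneg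

theorem PosSemidef.re_trace_mul_nonneg {A B : Matrix n n 𝕜} (hA : A.PosSemidef)
    (hB : B.PosSemidef) : 0 ≤ RCLike.re (A * B).trace :=
  (RCLike.nonneg_iff.mp (hA.trace_mul_nonneg hB)).1

open scoped MatrixOrder in
theorem PosSemidef.mul_eq_zero_of_trace_mul_eq_zero {Q A : Matrix n n 𝕜}
    (hQ : IsStarProjection Q) (hA : A.PosSemidef) (h : (Q * A).trace = 0) : Q * A = 0 := by
  obtain ⟨X, rfl⟩ := CStarAlgebra.nonneg_iff_eq_star_mul_self.mp hA.nonneg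
  rw [star_eq_conjTranspose] at h ⊢
  have hQ' : Qᴴ = Q := hQ.isSelfAdjoint
  have hXQ : X * Q = 0 := by
    -- `Tr[Q Xᴴ X] = Tr[(X Q) (X Q)ᴴ]`
    rw [← trace_mul_conjTranspose_self_eq_zero_iff, ← h, conjTranspose_mul, hQ', ← mul_assoc,
      mul_assoc X, hQ.isIdempotentElem.eq, trace_mul_comm, ← mul_assoc, trace_mul_comm]
  rw [← mul_assoc, ← hQ', ← conjTranspose_mul, hXQ, conjTranspose_zero, zero_mul]

theorem range_toLin'_le_iff {P A : Matrix n n 𝕜} (hP : IsIdempotentElem P) :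
    LinearMap.range (toLin' A) ≤ LinearMap.range (toLin' P) ↔ P * A = A := by
  have hP' : IsIdempotentElem (toLin' P) := by
    rw [IsIdempotentElem, Module.End.mul_eq_comp, ← toLin'_mul, hP.eq]
  rw [← LinearMap.IsIdempotentElem.comp_eq_right_iff hP', ← toLin'_mul, toLin'.injective.eq_iff]

open scoped MatrixOrder in
theorem range_toLin'_le_iff_re_trace_one_sub_mul_eq_zero {P A : Matrix n n 𝕜}
    (hP : IsStarProjection P) (hA : A.PosSemidef) :
    LinearMap.range (toLin' A) ≤ LinearMap.range (toLin' P) ↔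
      RCLike.re ((1 - P) * A).trace = 0 := by
  have hnonneg := RCLike.nonneg_iff.mp (hP.one_sub.posSemidef.trace_mul_nonneg hA)
  rw [range_toLin'_le_iff hP.isIdempotentElem, ← sub_eq_zero, ← sub_one_mul, ← neg_sub,
    neg_mul, neg_eq_zero]
  refine ⟨fun h ↦ by rw [h, trace_zero, map_zero], fun h ↦ ?_⟩
  exact hA.mul_eq_zero_of_trace_mul_eq_zero hP.one_sub (RCLike.ext (by simpa using h)
    (by simpa using hnonneg.2))

open scoped MatrixOrder in
theorem re_trace_mul_le_of_le_smul_one {Q σ A : Matrix n n 𝕜} {q : ℝ}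
    (hQ : IsStarProjection Q) (hQσ : Q * σ * Q = σ) (hσq : σ ≤ (q : 𝕜) • 1)
    (hA : A.PosSemidef) :
    RCLike.re (σ * A).trace ≤ q * RCLike.re (Q * A).trace := by
  have hQ' : Qᴴ = Q := hQ.isSelfAdjoint
  have hM : (Q * A * Q).PosSemidef := by
    simpa only [hQ'] using hA.mul_mul_conjTranspose_same Q
  have hσA : (σ * A).trace = (σ * (Q * A * Q)).trace := by
    conv_lhs => rw [← hQσ]
    simp only [mul_assoc]
    rw [trace_mul_comm Q]
    simp only [mul_assoc]
  have hQA : (Q * A * Q).trace = (Q * A).trace := by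
    rw [trace_mul_comm, ← mul_assoc, hQ.isIdempotentElem.eq]
  have h := (RCLike.nonneg_iff.mp ((le_iff.mp hσq).trace_mul_nonneg hM)).1
  rw [sub_mul, smul_mul, one_mul, trace_sub, trace_smul, hQA, map_sub, smul_eq_mul,
    RCLike.re_ofReal_mul, sub_nonneg] at h
  rwa [hσA]

end Matrix

theorem sub_mul_add_mul_le_and_eq_self_iff {x α β q s t : ℝ} (hα : 0 ≤ α) (hαq : α * q < β)
    (ht : 0 ≤ t) (hs : 0 ≤ s) (hst : s ≤ q * t) :
    x - β * t + α * s ≤ x ∧ (x - β * t + α * s = x ↔ t = 0) := by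
  have hαs : α * s ≤ α * q * t := by nlinarith
  refine ⟨by nlinarith, fun h ↦ ?_, fun h ↦ ?_⟩
  · nlinarith
  · subst h
    nlinarith

theorem extremal_povm_stmt10_general {n : ℕ} (C : Set (Matrix (Fin n) (Fin n) ℂ))
    (hCpsd : ∀ ζ ∈ C, ζ.PosSemidef)
    (hCtr : ∀ ζ ∈ C, ζ.trace = (n : ℂ))
    (Ξ₀ : Matrix (Fin n) (Fin n) ℂ)
    (hmin : ∀ ζ ∈ C,
      LinearMap.range (Matrix.toLin' ζ) ≤ LinearMap.range (Matrix.toLin' Ξ₀) → ζ = Ξ₀)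
    (P : Matrix (Fin n) (Fin n) ℂ) (hPproj : P * P = P) (hPherm : P.IsHermitian)
    (hPrange : LinearMap.range (Matrix.toLin' P) = LinearMap.range (Matrix.toLin' Ξ₀))
    (r : ℕ) (hrpos : 0 < r)
    (σ : Matrix (Fin n) (Fin n) ℂ) (hσ : σ.PosSemidef)
    (horth : P * σ = 0)
    (qbar : ℝ) (hqbar : IsGreatest {x : ℝ | ∃ i, hσ.1.eigenvalues i = x} qbar)
    (α : ℝ) (hα0 : 0 ≤ α) (hα1 : α < 1 / (1 + r * qbar))
    (ρ : Matrix (Fin n) (Fin n) ℂ)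
    (hρ : ρ = ((1 - α) / r : ℝ) • P + α • σ) :
    ∀ ζ ∈ C, (ρ * ζ).trace.re ≤ (1 - α) * n / r ∧
      ((ρ * ζ).trace.re = (1 - α) * n / r ↔ ζ = Ξ₀) := by
  intro ζ hζC
  have hP : IsStarProjection P := ⟨hPproj, hPherm⟩
  have hζ := hCpsd ζ hζC
  have hσ_compress : (1 - P) * σ * (1 - P) = σ := by
    have hσP : σ * P = 0 := by
      simpa [hσ.1.eq, hPherm.eq] using congrArg Matrix.conjTranspose horth
    simp [sub_mul, mul_sub, horth, hσP]
  have hqbar0 : 0 ≤ qbar := by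
    obtain ⟨i, rfl⟩ := hqbar.1
    exact hσ.eigenvalues_nonneg i
  have hαq : α * qbar < (1 - α) / r := by
    have hrpos' : (0 : ℝ) < r := by exact_mod_cast hrpos
    rw [lt_div_iff₀ (by positivity)] at hα1
    rw [lt_div_iff₀ hrpos']
    nlinarith
  have hst := (1 - P).re_trace_mul_le_of_le_smul_one hP.one_sub hσ_compress
    (hσ.1.le_smul_one_of_eigenvalues_le fun i ↦ hqbar.2 ⟨i, rfl⟩) hζ
  have hval : (ρ * ζ).trace.re =
      (1 - α) * n / r - (1 - α) / r * ((1 - P) * ζ).trace.re + α * (σ * ζ).trace.re := by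
    have hPζ : (P * ζ).trace = n - ((1 - P) * ζ).trace := by
      rw [sub_mul, one_mul, Matrix.trace_sub, hCtr ζ hζC, sub_sub_cancel]
    rw [hρ, add_mul, smul_mul_assoc, smul_mul_assoc, Matrix.trace_add, Matrix.trace_smul,
      Matrix.trace_smul, hPζ]
    simp only [Complex.add_re, Complex.smul_re, Complex.sub_re, Complex.natCast_re, smul_eq_mul]
    ring
  have ht_eq_zero_iff : ((1 - P) * ζ).trace.re = 0 ↔ ζ = Ξ₀ := by
    refine (Matrix.range_toLin'_le_iff_re_trace_one_sub_mul_eq_zero hP hζ).symm.trans ?_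
    rw [hPrange]
    exact ⟨hmin ζ hζC, fun h ↦ h ▸ le_rfl⟩
  rw [hval, ← ht_eq_zero_iff]
  exact sub_mul_add_mul_le_and_eq_self_iff hα0 hαq
    (hP.one_sub.posSemidef.re_trace_mul_nonneg hζ) (hσ.re_trace_mul_nonneg hζ) hst

/-- Proposition 3 (stability under randomization): with `Ξ₀`, `P`, `r` as in the
uniqueness proposition, let `σ` be a density operator with support orthogonal to
`supp Ξ₀`, `q̄` its maximal eigenvalue, and `ρ = (1-α) P/r + α σ` with
`0 ≤ α < 1/(1 + r q̄)`.  Then for all `ζ ∈ C`, `Tr[ρ ζ] ≤ (1-α) dim H / r`, with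
equality iff `ζ = Ξ₀`. -/
theorem extremal_povm_stmt10 {n : ℕ} (C : Set (Matrix (Fin n) (Fin n) ℂ))
    (hCconv : Convex ℝ C) (hCpsd : ∀ ζ ∈ C, ζ.PosSemidef)
    (hCtr : ∀ ζ ∈ C, ζ.trace = (n : ℂ))
    (Ξ₀ : Matrix (Fin n) (Fin n) ℂ) (hΞ₀ : Ξ₀ ∈ C)
    (hmin : ∀ ζ ∈ C,
      LinearMap.range (Matrix.toLin' ζ) ≤ LinearMap.range (Matrix.toLin' Ξ₀) → ζ = Ξ₀)
    (P : Matrix (Fin n) (Fin n) ℂ) (hPproj : P * P = P) (hPherm : P.IsHermitian)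
    (hPrange : LinearMap.range (Matrix.toLin' P) = LinearMap.range (Matrix.toLin' Ξ₀))
    (r : ℕ) (hr : (r : ℂ) = P.trace) (hrpos : 0 < r)
    (σ : Matrix (Fin n) (Fin n) ℂ) (hσ : σ.PosSemidef) (hσtr : σ.trace = 1)
    (horth : P * σ = 0)
    (qbar : ℝ) (hqbar : IsGreatest {x : ℝ | ∃ i, hσ.1.eigenvalues i = x} qbar)
    (α : ℝ) (hα0 : 0 ≤ α) (hα1 : α < 1 / (1 + r * qbar))
    (ρ : Matrix (Fin n) (Fin n) ℂ)
    (hρ : ρ = ((1 - α) / r : ℝ) • P + α • σ) :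
    ∀ ζ ∈ C, (ρ * ζ).trace.re ≤ (1 - α) * n / r ∧
      ((ρ * ζ).trace.re = (1 - α) * n / r ↔ ζ = Ξ₀) :=
  extremal_povm_stmt10_general C hCpsd hCtr Ξ₀ hmin P hPproj hPherm hPrange r hrpos σ hσ horth qbar
    hqbar α hα0 hα1 ρ hρ
end

section
/- Let Ξ₀ be an extreme point of the convex set C of positive semidefinite operators satisfying fixed trace constraints Tr[T_k Ξ] = c_k with each T_k invariant under conjugation by a compact group of unitaries {U_h}_{h∈H₀} that also leaves support(Ξ₀) invariant and leaves C invariant under conjugation. Then Ξ₀ commutes with every U_h, h ∈ H₀. (Proof via averaging: the Haar average ξ = ∫ U_h Ξ₀ U_h† dh lies in C, has support contained in support(Ξ₀), hence equals Ξ₀ by extremality.) -/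
/-!
Conjugating `Ξ₀` by `U_h` gives a point `Ξ` of `C` (the constraints are invariant) whose support
lies in that of `Ξ₀`. Range inclusion between positive semidefinite matrices yields a domination
`Ξ ≤ s Ξ₀`, so `Ξ₀ + s⁻¹ (Ξ₀ - Ξ)` is still in `C` and `Ξ₀` lies inside a segment of `C` with
endpoint `Ξ`. Extremality forces `Ξ = Ξ₀`, i.e. `Ξ₀` commutes with `U_h`.
-/

open scoped ComplexOrder Matrix MatrixOrder

namespace Matrix

variable {n 𝕜 : Type*} [Fintype n] [DecidableEq n] [RCLike 𝕜] {A B : Matrix n n 𝕜}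

theorem continuousOn_spectrum (A : Matrix n n 𝕜) (f : ℝ → ℝ) : ContinuousOn f (spectrum ℝ A) :=
  A.finite_real_spectrum.continuousOn f

/-- The orthogonal projection onto the range of a Hermitian matrix `A`: since `0⁻¹ = 0`, the
function `x * x⁻¹` is the indicator of `x ≠ 0` on the spectrum. -/
noncomputable def supportProjection (A : Matrix n n 𝕜) : Matrix n n 𝕜 :=
  cfc (fun x : ℝ => x * x⁻¹) A

theorem star_supportProjection (A : Matrix n n 𝕜) :
    star A.supportProjection = A.supportProjection :=
  IsSelfAdjoint.star_eq (cfc_predicate _ A)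

theorem supportProjection_mul_supportProjection (A : Matrix n n 𝕜) :
    A.supportProjection * A.supportProjection = A.supportProjection := by
  rw [supportProjection, ← cfc_mul _ _ A (A.continuousOn_spectrum _) (A.continuousOn_spectrum _)]
  simp only [← mul_assoc, mul_inv_mul_cancel]

theorem IsHermitian.supportProjection_mul_self (hA : A.IsHermitian) :
    A.supportProjection * A = A :=
  calc A.supportProjection * A = cfc (fun x : ℝ => x * x⁻¹) A * cfc (fun x => x) A := by
        rw [supportProjection, cfc_id' ℝ A]
    _ = cfc (fun x : ℝ => x * x⁻¹ * x) A :=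
        (cfc_mul _ _ A (A.continuousOn_spectrum _) (A.continuousOn_spectrum _)).symm
    _ = A := by simp only [mul_inv_mul_cancel]; exact cfc_id' ℝ A

theorem IsHermitian.supportProjection_mul_of_range_le (hA : A.IsHermitian)
    (h : LinearMap.range (toLin' B) ≤ LinearMap.range (toLin' A)) :
    A.supportProjection * B = B := by
  refine toLin'.injective (LinearMap.ext fun v => ?_)
  obtain ⟨w, hw⟩ := h (LinearMap.mem_range_self _ v)
  rw [toLin'_mul, LinearMap.comp_apply, ← hw, ← LinearMap.comp_apply, ← toLin'_mul,
    hA.supportProjection_mul_self]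

theorem PosSemidef.exists_supportProjection_le_smul (hA : A.PosSemidef) :
    ∃ s : ℝ, 0 < s ∧ A.supportProjection ≤ s • A := by
  obtain ⟨M, hM⟩ := (A.finite_real_spectrum.image (·⁻¹)).bddAbove
  refine ⟨max M 1, by positivity, ?_⟩
  calc A.supportProjection ≤ cfc (fun x => max M 1 * x) A :=
        cfc_mono (fun x hx => ?_) (A.continuousOn_spectrum _) (A.continuousOn_spectrum _)
    _ = max M 1 • A := by rw [cfc_const_mul _ _ A, cfc_id' ℝ A]
  rcases (spectrum_nonneg_of_nonneg hA.nonneg hx).eq_or_lt with rfl | hx₀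
  · simp
  · calc x * x⁻¹ = x⁻¹ * x := mul_comm _ _
      _ ≤ max M 1 * x := by gcongr; exact (hM ⟨x, hx, rfl⟩).trans (le_max_left _ _)

theorem PosSemidef.exists_le_smul_of_range_le (hA : A.PosSemidef) (hB : B.PosSemidef)
    (h : LinearMap.range (toLin' B) ≤ LinearMap.range (toLin' A)) :
    ∃ c : ℝ, 0 < c ∧ B ≤ c • A := by
  set P := A.supportProjection
  have hPB : P * B = B := hA.1.supportProjection_mul_of_range_le h
  have hBP : B * P = B := by
    have h := congrArg star hPB
    rwa [star_mul, A.star_supportProjection, star_eq_conjTranspose B, hB.1.eq] at h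
  obtain ⟨t, ht⟩ := B.finite_real_spectrum.bddAbove
  obtain ⟨s, hs, hPs⟩ := hA.exists_supportProjection_le_smul
  have hBt : B ≤ algebraMap ℝ _ (max t 1) :=
    (le_algebraMap_iff_spectrum_le hB.1).2 fun x hx => (ht hx).trans (le_max_left _ _)
  refine ⟨max t 1 * s, by positivity, ?_⟩
  calc B = star P * B * P := by rw [A.star_supportProjection, hPB, hBP]
    _ ≤ star P * algebraMap ℝ _ (max t 1) * P := star_left_conjugate_le_conjugate hBt P
    _ = max t 1 • P := by
        rw [A.star_supportProjection, Algebra.algebraMap_eq_smul_one, mul_smul_comm, mul_one,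
          smul_mul_assoc, A.supportProjection_mul_supportProjection]
    _ ≤ max t 1 • s • A := smul_le_smul_of_nonneg_left hPs (by positivity)
    _ = (max t 1 * s) • A := smul_smul _ _ _

end Matrix

theorem Unitary.commute_of_mul_mul_star_eq {R : Type*} [Monoid R] [StarMul R] {u a : R}
    (hu : u ∈ unitary R) (h : u * a * star u = a) : Commute a u :=
  calc a * u = u * a * (star u * u) := by rw [← mul_assoc, h]
    _ = u * a := by rw [Unitary.star_mul_self_of_mem hu, mul_one]

theorem eq_of_mem_extremePoints_of_add_smul_sub_mem {𝕜 E : Type*} [Field 𝕜] [LinearOrder 𝕜]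
    [IsStrictOrderedRing 𝕜] [AddCommGroup E] [Module 𝕜 E] {s : Set E} {x y : E} {t : 𝕜}
    (hx : x ∈ s.extremePoints 𝕜) (hy : y ∈ s) (ht : 0 < t) (hz : x + t • (x - y) ∈ s) :
    y = x :=
  hx.2 hy hz ⟨t / (1 + t), 1 / (1 + t), by positivity, by positivity, by field_simp; ring, by
    match_scalars <;> field_simp
    ring⟩

section TraceConstraints

variable {ι n 𝕜 : Type*} [Fintype n] [RCLike 𝕜]

def traceConstraintSet (T : ι → Matrix n n 𝕜) (c : ι → 𝕜) : Set (Matrix n n 𝕜) :=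
  {Ξ | Ξ.PosSemidef ∧ ∀ k, (T k * Ξ).trace = c k}

variable {T : ι → Matrix n n 𝕜} {c : ι → 𝕜} {Ξ₀ Ξ : Matrix n n 𝕜}

theorem conj_mem_traceConstraintSet [DecidableEq n] {u : Matrix n n 𝕜}
    (hu : u ∈ unitary (Matrix n n 𝕜)) (hT : ∀ k, u * T k * star u = T k)
    (hΞ : Ξ ∈ traceConstraintSet T c) :
    u * Ξ * star u ∈ traceConstraintSet T c := by
  refine ⟨hΞ.1.mul_mul_conjTranspose_same u, fun k => ?_⟩
  have hTu : T k * u = u * T k := Unitary.commute_of_mul_mul_star_eq hu (hT k)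
  have hcomm : T k * (u * Ξ * star u) = u * (T k * Ξ) * star u := by
    simp only [← mul_assoc, hTu]
  rw [hcomm, Matrix.trace_mul_cycle, Unitary.star_mul_self_of_mem hu, one_mul, hΞ.2 k]

theorem add_inv_smul_sub_mem_traceConstraintSet (hΞ₀ : Ξ₀ ∈ traceConstraintSet T c)
    (hΞ : Ξ ∈ traceConstraintSet T c) {s : ℝ} (hs : 0 < s) (hle : Ξ ≤ s • Ξ₀) :
    Ξ₀ + s⁻¹ • (Ξ₀ - Ξ) ∈ traceConstraintSet T c := by
  refine ⟨?_, fun k => ?_⟩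
  · have h : Ξ₀ + s⁻¹ • (Ξ₀ - Ξ) = s⁻¹ • ((s • Ξ₀ - Ξ) + Ξ₀) := by
      match_scalars <;> field_simp
    rw [h]
    exact ((Matrix.le_iff.1 hle).add hΞ₀.1).smul (inv_nonneg.2 hs.le)
  · simp [mul_add, mul_sub, Matrix.trace_add, Matrix.trace_sub, hΞ₀.2 k, hΞ.2 k]

theorem eq_of_mem_extremePoints_of_range_le [DecidableEq n]
    (hext : Ξ₀ ∈ (traceConstraintSet T c).extremePoints ℝ) (hΞ : Ξ ∈ traceConstraintSet T c)
    (h : LinearMap.range (Matrix.toLin' Ξ) ≤ LinearMap.range (Matrix.toLin' Ξ₀)) : Ξ = Ξ₀ := by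
  obtain ⟨s, hs, hle⟩ := hext.1.1.exists_le_smul_of_range_le hΞ.1 h
  exact eq_of_mem_extremePoints_of_add_smul_sub_mem hext hΞ (inv_pos.2 hs)
    (add_inv_smul_sub_mem_traceConstraintSet hext.1 hΞ hs hle)

end TraceConstraints

theorem extremal_povm_stmt12_general {n K : ℕ} {G : Type*} [Group G]
    (U : G →* Matrix.unitaryGroup (Fin n) ℂ)
    (T : Fin K → Matrix (Fin n) (Fin n) ℂ) (c : Fin K → ℂ)
    (hTinv : ∀ (h : G) (k : Fin K),
      (U h : Matrix (Fin n) (Fin n) ℂ) * T k * star (U h : Matrix (Fin n) (Fin n) ℂ)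
        = T k)
    (C : Set (Matrix (Fin n) (Fin n) ℂ))
    (hC : C = {Ξ | Ξ.PosSemidef ∧ ∀ k, (T k * Ξ).trace = c k})
    (Ξ₀ : Matrix (Fin n) (Fin n) ℂ)
    (hext : Ξ₀ ∈ C.extremePoints ℝ)
    (hsupp : ∀ h : G,
      LinearMap.range (Matrix.toLin'
        ((U h : Matrix (Fin n) (Fin n) ℂ) * Ξ₀ * star (U h : Matrix (Fin n) (Fin n) ℂ)))
        = LinearMap.range (Matrix.toLin' Ξ₀)) :
    ∀ h : G, Ξ₀ * (U h : Matrix (Fin n) (Fin n) ℂ)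
      = (U h : Matrix (Fin n) (Fin n) ℂ) * Ξ₀ := by
  change C = traceConstraintSet T c at hC
  subst hC
  intro h
  have hconj : (U h : Matrix (Fin n) (Fin n) ℂ) * Ξ₀ * star (U h : Matrix (Fin n) (Fin n) ℂ)
      = Ξ₀ :=
    eq_of_mem_extremePoints_of_range_le hext
      (conj_mem_traceConstraintSet (U h).2 (hTinv h) hext.1) (hsupp h).le
  exact Unitary.commute_of_mul_mul_star_eq (U h).2 hconj

/-- Averaging argument: an extreme point `Ξ₀` of the convex set `C` of PSD operators
satisfying trace constraints `Tr[T_k Ξ] = c_k`, with the `T_k` invariant under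
conjugation by a (finite) unitary representation `U` of a group `G₀` which also leaves
the support of `Ξ₀` invariant, commutes with every `U_h`. -/
theorem extremal_povm_stmt12 {n K : ℕ} {G : Type*} [Group G] [Fintype G]
    (U : G →* Matrix.unitaryGroup (Fin n) ℂ)
    (T : Fin K → Matrix (Fin n) (Fin n) ℂ) (c : Fin K → ℂ)
    (hTinv : ∀ (h : G) (k : Fin K),
      (U h : Matrix (Fin n) (Fin n) ℂ) * T k * star (U h : Matrix (Fin n) (Fin n) ℂ)
        = T k)
    (C : Set (Matrix (Fin n) (Fin n) ℂ))
    (hC : C = {Ξ | Ξ.PosSemidef ∧ ∀ k, (T k * Ξ).trace = c k})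
    (Ξ₀ : Matrix (Fin n) (Fin n) ℂ) (hΞ₀ : Ξ₀ ∈ C)
    (hext : Ξ₀ ∈ C.extremePoints ℝ)
    (hsupp : ∀ h : G,
      LinearMap.range (Matrix.toLin'
        ((U h : Matrix (Fin n) (Fin n) ℂ) * Ξ₀ * star (U h : Matrix (Fin n) (Fin n) ℂ)))
        = LinearMap.range (Matrix.toLin' Ξ₀)) :
    ∀ h : G, Ξ₀ * (U h : Matrix (Fin n) (Fin n) ℂ)
      = (U h : Matrix (Fin n) (Fin n) ℂ) * Ξ₀ :=
  extremal_povm_stmt12_general U T c hTinv C hC Ξ₀ hext hsupp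
end
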